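/- arXiv:2504.01759 — 2 statements merged into one kernel-verified Lean document; each statement's English description precedes it below -/
import Mathlib

section
/- Let 0 < α < 1/M, β > 0 and d ∈ ℝ^N with d_m > 0 for all m, and let x̂^∞ be the fixed point of the map x ↦ F(x) − β d. Set d̲ = min_{m=1,…,N} d_m, x̄_0 = max{ x̂_{1,0}, …, x̂_{N,0}, 0 }, and λ = 1 − min{ 2α/(1 − αM + 2α), β d̲ / ( x̄_0 − log(α/(1 − αM + α)) + β d̲ ) }. Then 0 ≤ λ < 1, and the reference dynamical system satisfies ‖x̂_i − x̂^∞‖_∞ ≤ λ · ‖x̂_{i−1} − x̂^∞‖_∞ for every i ≥ 1. -/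
/-!
Write `F_m(x) = φ(e^{x_m}, Σ_n e^{x_n})` with
`φ(E, S) = log ((cE + α(1 + S)) / (c + α(1 + S)))` and `c = 1 - αM`. Then `F_m` is monotone in `x`
on `{x_m ≤ 0}`, and along a diagonal shift `z ↦ x + z·𝟙` its derivative is at most
`c / (c + 2α) = 1 - 2α/(c + 2α)` as long as `x_m + z ≤ 0`. The fixed point satisfies
`log (α/(c + α)) ≤ x̂^∞_m + βd_m ≤ 0`, since `log (α/(c + α)) ≤ F_m(x) ≤ max(x_m, 0)`.
With `δ = ‖x̂_{i-1} - x̂^∞‖_∞`, the bounds `x̂^∞ - δ ≤ x̂_{i-1} ≤ x̂^∞ + δ` and the shift estimate give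
the rate `1 - 2α/(c + 2α)` from below, and from above when `x̂^∞_m + δ ≤ 0`. Otherwise the orbit
bound `x̂_{i-1,m} ≤ x̄_0` gives `F_m(x̂_{i-1}) ≤ min(x̂^∞_m + δ, x̄_0)`, and the lower bound on
`x̂^∞_m` turns this into the rate `W/(W + βd_m) ≤ 1 - βd̲/(W + βd̲)` with `W = x̄_0 - log (α/(c + α))`.
-/

/-- The αβ-HMM log-belief-ratio mapping `F`, defined componentwise for `m = 1, …, M-1` by
`F_m(x) = log(((1 - αM)·exp(x_m) + α + α·Σ_n exp(x_n)) / (1 - αM + α + α·Σ_n exp(x_n)))`. -/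
noncomputable def abHMM.F (α : ℝ) (M : ℕ) (x : Fin (M - 1) → ℝ) : Fin (M - 1) → ℝ :=
  fun m => Real.log (((1 - α * M) * Real.exp (x m) + α + α * ∑ n, Real.exp (x n)) /
    (1 - α * M + α + α * ∑ n, Real.exp (x n)))

namespace abHMM

open Real Finset

noncomputable def phi (c a E S : ℝ) : ℝ := log ((c * E + a * (1 + S)) / (c + a * (1 + S)))

section phi

variable {c a E E' S S' : ℝ}

lemma phi_le_phi_of_le_left (hc : 0 < c) (ha : 0 < a) (hS : 0 ≤ S) (hE : 0 < E) (h : E ≤ E') :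
    phi c a E S ≤ phi c a E' S := by
  unfold phi
  gcongr

lemma phi_le_phi_of_le_right (hc : 0 < c) (ha : 0 < a) (hE : 0 < E) (hE1 : E ≤ 1) (hS : 0 ≤ S)
    (h : S ≤ S') : phi c a E S ≤ phi c a E S' := by
  have hS' : 0 ≤ S' := hS.trans h
  apply log_le_log (by positivity)
  rw [div_le_div_iff₀ (by positivity) (by positivity)]
  nlinarith [mul_nonneg (mul_nonneg hc.le ha.le) (mul_nonneg (sub_nonneg.2 h) (sub_nonneg.2 hE1))]

lemma phi_le_max_log (hc : 0 < c) (ha : 0 < a) (hE : 0 < E) (hS : 0 ≤ S) :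
    phi c a E S ≤ max (log E) 0 := by
  have hden : 0 < c + a * (1 + S) := by positivity
  rcases le_total E 1 with hE1 | hE1
  · refine le_max_of_le_right (log_nonpos (by positivity) ?_)
    rw [div_le_one hden]
    nlinarith
  · refine le_max_of_le_left (log_le_log (by positivity) ?_)
    rw [div_le_iff₀ hden]
    nlinarith [mul_nonneg ha.le (mul_nonneg (sub_nonneg.2 hE1) (by linarith : (0 : ℝ) ≤ 1 + S))]

lemma log_div_le_phi (hc : 0 < c) (ha : 0 < a) (hE : 0 < E) (hS : 0 ≤ S) :
    log (a / (c + a)) ≤ phi c a E S := by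
  apply log_le_log (by positivity)
  rw [div_le_div_iff₀ (by positivity) (by positivity)]
  nlinarith [mul_pos (mul_pos hc (by positivity : (0 : ℝ) < c + a)) hE,
    mul_nonneg (mul_nonneg hc.le ha.le) hS]

lemma phi_mul_exp_hasDerivAt (hc : 0 < c) (ha : 0 < a) (hE : 0 < E) (hS : 0 ≤ S) (z : ℝ) :
    HasDerivAt (fun z => phi c a (E * exp z) (S * exp z))
      ((c * (E * exp z) + a * (S * exp z)) / (c * (E * exp z) + a * (S * exp z) + a)
        - a * (S * exp z) / (c + a + a * (S * exp z))) z := by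
  have hnum : ∀ z, 0 < (c * E + a * S) * exp z + a := fun z => by positivity
  have hden : ∀ z, 0 < c + a + a * S * exp z := fun z => by positivity
  have hphi : (fun z => phi c a (E * exp z) (S * exp z)) =
      fun z => log ((c * E + a * S) * exp z + a) - log (c + a + a * S * exp z) := by
    ext z
    rw [← log_div (hnum z).ne' (hden z).ne', phi]
    ring_nf
  rw [hphi]
  refine ((((hasDerivAt_exp z).const_mul (c * E + a * S)).add_const a).log (hnum z).ne').fun_sub
    ((((hasDerivAt_exp z).const_mul (a * S)).const_add (c + a)).log (hden z).ne') |>.congr_deriv ?_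
  ring

lemma phi_mul_exp_deriv_le (hc : 0 < c) (ha : 0 < a) {r t : ℝ} (hr : 0 < r) (hr1 : r ≤ 1)
    (hrt : r ≤ t) :
    (c * r + a * t) / (c * r + a * t + a) - a * t / (c + a + a * t) ≤ c / (c + 2 * a) := by
  have ht : 0 < t := hr.trans_le hrt
  have hP : 0 < c * r + a * t + a := by positivity
  have hD : 0 < c + a + a * t := by positivity
  have hC : 0 < c + 2 * a := by positivity
  suffices 2 * a / (c + 2 * a) ≤ a / (c * r + a * t + a) + a * t / (c + a + a * t) by
    have e1 : (c * r + a * t) / (c * r + a * t + a) = 1 - a / (c * r + a * t + a) := by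
      field_simp; ring
    have e2 : c / (c + 2 * a) = 1 - 2 * a / (c + 2 * a) := by field_simp; ring
    rw [e1, e2]
    linarith
  rcases le_total 1 t with h1t | ht1
  · rw [div_add_div _ _ hP.ne' hD.ne', div_le_div_iff₀ hC (by positivity)]
    nlinarith [mul_nonneg (mul_nonneg ha.le (mul_nonneg hc.le (sub_nonneg.2 hr1))) hC.le,
      mul_nonneg (mul_nonneg ha.le (mul_nonneg hc.le (sub_nonneg.2 h1t))) hP.le]
  · have hP2 : 0 < (c + a) * t + a := by positivity
    have h1 : a / ((c + a) * t + a) ≤ a / (c * r + a * t + a) :=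
      div_le_div_of_nonneg_left ha.le hP (by nlinarith)
    refine le_trans ?_ (add_le_add h1 le_rfl)
    rw [div_add_div _ _ hP2.ne' hD.ne', div_le_div_iff₀ hC (by positivity)]
    nlinarith [mul_nonneg (mul_nonneg (mul_pos hc (by positivity : (0 : ℝ) < c + a)).le
      (sq_nonneg (1 - t))) ha.le, sq_nonneg (1 - t), mul_pos hc (by positivity : (0 : ℝ) < c + a)]

lemma phi_mul_exp_sub_le (hc : 0 < c) (ha : 0 < a) (hE : 0 < E) (hES : E ≤ S) {s t : ℝ}
    (hst : s ≤ t) (ht : E * exp t ≤ 1) :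
    phi c a (E * exp t) (S * exp t) - phi c a (E * exp s) (S * exp s) ≤
      c / (c + 2 * a) * (t - s) := by
  have hS : 0 ≤ S := hE.le.trans hES
  have hf := phi_mul_exp_hasDerivAt hc ha hE hS
  have hmem : ∀ z ≤ -log E, E * exp z ≤ 1 := fun z hz => by
    calc E * exp z ≤ E * exp (-log E) := by gcongr
      _ = 1 := by rw [exp_neg, exp_log hE, mul_inv_cancel₀ hE.ne']
  have ht' : t ≤ -log E := by
    have := log_nonpos (by positivity) ht
    rw [log_mul hE.ne' (exp_pos t).ne', log_exp] at this
    linarith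
  refine (convex_Iic (-log E)).image_sub_le_mul_sub_of_deriv_le
    (fun z _ => (hf z).continuousAt.continuousWithinAt)
    (fun z _ => (hf z).differentiableAt.differentiableWithinAt) (fun z hz => ?_) s
    (hst.trans ht') t ht' hst
  rw [interior_Iic] at hz
  rw [(hf z).deriv]
  exact phi_mul_exp_deriv_le hc ha (by positivity) (hmem z hz.le)
    (mul_le_mul_of_nonneg_right hES (exp_pos z).le)

end phi

variable {α : ℝ} {M : ℕ} {x y : Fin (M - 1) → ℝ} {m : Fin (M - 1)}

lemma F_apply (α : ℝ) (M : ℕ) (x : Fin (M - 1) → ℝ) (m : Fin (M - 1)) :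
    F α M x m = phi (1 - α * M) α (exp (x m)) (∑ n, exp (x n)) := by
  unfold F phi
  congr 1
  ring

lemma F_apply_le_max (hα : 0 < α) (hαM : α * M < 1) : F α M x m ≤ max (x m) 0 := by
  simpa only [F_apply, log_exp] using
    phi_le_max_log (by linarith) hα (exp_pos (x m)) (by positivity)

lemma log_div_le_F_apply (hα : 0 < α) (hαM : α * M < 1) :
    log (α / (1 - α * M + α)) ≤ F α M x m := by
  rw [F_apply]
  exact log_div_le_phi (by linarith) hα (exp_pos _) (by positivity)

lemma F_apply_le_F_apply (hα : 0 < α) (hαM : α * M < 1) (hxy : x ≤ y) (hx : x m ≤ 0) :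
    F α M x m ≤ F α M y m := by
  have hc : 0 < 1 - α * M := by linarith
  rw [F_apply, F_apply]
  calc phi (1 - α * M) α (exp (x m)) (∑ n, exp (x n))
      ≤ phi (1 - α * M) α (exp (x m)) (∑ n, exp (y n)) :=
        phi_le_phi_of_le_right hc hα (exp_pos _) (exp_le_one_iff.2 hx) (by positivity)
          (sum_le_sum fun n _ => exp_le_exp.2 (hxy n))
    _ ≤ phi (1 - α * M) α (exp (y m)) (∑ n, exp (y n)) :=
        phi_le_phi_of_le_left hc hα (by positivity) (exp_pos _) (exp_le_exp.2 (hxy m))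

lemma F_apply_add_sub_le (hα : 0 < α) (hαM : α * M < 1) {s t : ℝ} (hst : s ≤ t)
    (ht : x m + t ≤ 0) :
    F α M (fun n => x n + t) m - F α M (fun n => x n + s) m ≤
      (1 - α * M) / (1 - α * M + 2 * α) * (t - s) := by
  simp only [F_apply, exp_add, ← sum_mul]
  exact phi_mul_exp_sub_le (by linarith) hα (exp_pos _)
    (single_le_sum (fun n _ => (exp_pos (x n)).le) (mem_univ m)) hst
    (by rw [← exp_add]; exact exp_le_one_iff.2 ht)

lemma one_sub_min_div_add {a b c d : ℝ} (hab : 0 < b + a) (hcd : 0 < d + c) :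
    1 - min (a / (b + a)) (c / (d + c)) = max (b / (b + a)) (d / (d + c)) := by
  rw [← sub_sub_cancel 1 (max _ _), ← min_sub_sub_left, one_sub_div hab.ne', one_sub_div hcd.ne',
    add_sub_cancel_left, add_sub_cancel_left]

lemma sub_le_div_add_mul {b y D X W δ : ℝ} (hD : 0 < D) (hW : 0 < W) (hb : X - W ≤ b + D)
    (hyb : y ≤ b + δ) (hyX : y ≤ X) : y - (b + D) ≤ W / (W + D) * δ := by
  have hWD : 0 < W + D := by linarith
  calc y - (b + D) ≤ W / (W + D) * (y - b) := by
        rw [div_mul_eq_mul_div, le_div_iff₀ hWD]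
        nlinarith
    _ ≤ W / (W + D) * δ := by gcongr; linarith

lemma abs_F_apply_sub_F_apply_le (hα : 0 < α) (hαM : α * M < 1) {v : Fin (M - 1) → ℝ} {D X δ K : ℝ}
    (hD : 0 < D) (hFv : F α M v m = v m + D) (hxv : ∀ n, |x n - v n| ≤ δ) (hxX : x m ≤ X)
    (hX : 0 ≤ X) (hK₁ : (1 - α * M) / (1 - α * M + 2 * α) ≤ K)
    (hK₂ : (X - log (α / (1 - α * M + α))) / (X - log (α / (1 - α * M + α)) + D) ≤ K) :
    |F α M x m - F α M v m| ≤ K * δ := by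
  set l := log (α / (1 - α * M + α))
  have hδ : 0 ≤ δ := (abs_nonneg _).trans (hxv m)
  have hv_add : (fun n => v n + 0) = v := by simp only [add_zero]
  have hvD : v m + D ≤ 0 :=
    (le_max_iff.1 (hFv ▸ F_apply_le_max hα hαM)).resolve_left (by linarith)
  have hlv : l ≤ v m + D := hFv ▸ log_div_le_F_apply hα hαM
  have hl : l < 0 := log_neg (by positivity) ((div_lt_one (by linarith)).2 (by linarith))
  have hK₁δ := mul_le_mul_of_nonneg_right hK₁ hδ
  have hK₂δ := mul_le_mul_of_nonneg_right hK₂ hδ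
  rw [abs_le]
  constructor
  · have hlow : F α M (fun n => v n + -δ) m ≤ F α M x m :=
      F_apply_le_F_apply hα hαM (fun n => by linarith [(abs_le.1 (hxv n)).1]) (by linarith)
    have hshift := F_apply_add_sub_le hα hαM (x := v) (neg_nonpos.2 hδ) (by linarith)
    rw [hv_add] at hshift
    linarith
  rcases le_total (v m + δ) 0 with hvδ | hvδ
  · have hupp : F α M x m ≤ F α M (fun n => v n + δ) m :=
      F_apply_le_F_apply hα hαM (fun n => by linarith [(abs_le.1 (hxv n)).2])
        (by linarith [(abs_le.1 (hxv m)).2])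
    have hshift := F_apply_add_sub_le hα hαM (x := v) hδ hvδ
    rw [hv_add] at hshift
    linarith
  · have hFx := F_apply_le_max (x := x) (m := m) hα hαM
    have hxvm := (abs_le.1 (hxv m)).2
    have := sub_le_div_add_mul hD (by linarith : 0 < X - l) (by linarith : X - (X - l) ≤ v m + D)
      (hFx.trans (max_le (by linarith) hvδ)) (hFx.trans (max_le hxX hX))
    linarith

lemma norm_F_sub_F_le (hα : 0 < α) (hαM : α * M < 1) {v D : Fin (M - 1) → ℝ} {X K : ℝ}
    (hD : ∀ m, 0 < D m) (hFv : ∀ m, F α M v m = v m + D m) (hxX : ∀ m, x m ≤ X) (hX : 0 ≤ X)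
    (hK₁ : (1 - α * M) / (1 - α * M + 2 * α) ≤ K)
    (hK₂ : ∀ m, (X - log (α / (1 - α * M + α))) / (X - log (α / (1 - α * M + α)) + D m) ≤ K) :
    ‖F α M x - F α M v‖ ≤ K * ‖x - v‖ := by
  have hK : 0 ≤ K := le_trans (div_nonneg (by linarith) (by linarith)) hK₁
  refine (pi_norm_le_iff_of_nonneg (by positivity)).2 fun m => ?_
  rw [Pi.sub_apply, Real.norm_eq_abs]
  refine abs_F_apply_sub_F_apply_le hα hαM (hD m) (hFv m) (fun n => ?_) (hxX m) hX hK₁ (hK₂ m)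
  simpa only [Pi.sub_apply, Real.norm_eq_abs] using norm_le_pi_norm (x - v) n

lemma orbit_apply_le (hα : 0 < α) (hαM : α * M < 1) {D : Fin (M - 1) → ℝ} (hD : ∀ m, 0 ≤ D m)
    {xh : ℕ → Fin (M - 1) → ℝ} (hrec : ∀ i, xh (i + 1) = F α M (xh i) - D) {X : ℝ} (hX : 0 ≤ X)
    (h₀ : ∀ m, xh 0 m ≤ X) (i : ℕ) (m : Fin (M - 1)) : xh i m ≤ X := by
  induction i generalizing m with
  | zero => exact h₀ m
  | succ i ih =>
    rw [hrec i, Pi.sub_apply]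
    linarith [F_apply_le_max (x := xh i) (m := m) hα hαM, max_le (ih m) hX, hD m]

end abHMM

/-- Theorem 1, rate part: with `d̲ = min_m d_m`,
`x̄_0 = max{x̂_{1,0}, …, x̂_{N,0}, 0}` and
`λ = 1 - min{2α/(1-αM+2α), β d̲/(x̄_0 - log(α/(1-αM+α)) + β d̲)}`,
we have `0 ≤ λ < 1` and `‖x̂_i - x̂^∞‖_∞ ≤ λ ‖x̂_{i-1} - x̂^∞‖_∞` for every `i ≥ 1`,
where `‖·‖` is the sup norm on the Pi type `Fin (M-1) → ℝ`. -/
theorem abHMM_reference_system_contraction_rate (M : ℕ) (hM : 2 ≤ M) (α β : ℝ)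
    (hα : 0 < α) (hα' : α < 1 / M) (hβ : 0 < β)
    (d : Fin (M - 1) → ℝ) (hd : ∀ m, 0 < d m)
    (xinf : Fin (M - 1) → ℝ) (hfix : xinf = fun m => abHMM.F α M xinf m - β * d m)
    (xh : ℕ → Fin (M - 1) → ℝ)
    (hrec : ∀ i : ℕ, xh (i + 1) = fun m => abHMM.F α M (xh i) m - β * d m)
    (dlow : ℝ) (hdlow : dlow = sInf (Set.range d))
    (x0bar : ℝ) (hx0bar : x0bar = max (sSup (Set.range (xh 0))) 0)
    (lam : ℝ)
    (hlam : lam = 1 - min (2 * α / (1 - α * M + 2 * α))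
      (β * dlow / (x0bar - Real.log (α / (1 - α * M + α)) + β * dlow))) :
    0 ≤ lam ∧ lam < 1 ∧
      ∀ i : ℕ, ‖xh (i + 1) - xinf‖ ≤ lam * ‖xh i - xinf‖ := by
  have : Nonempty (Fin (M - 1)) := ⟨⟨0, by omega⟩⟩
  have hαM : α * M < 1 := (lt_div_iff₀ (by positivity)).1 hα'
  obtain ⟨m₀, hm₀⟩ : ∃ m, d m = dlow := hdlow ▸ exists_eq_ciInf_of_finite
  have hdlow_le (m) : dlow ≤ d m := hdlow ▸ ciInf_le (Finite.bddBelow_range d) m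
  have hX : 0 ≤ x0bar := hx0bar ▸ le_max_right _ _
  have hxh := abHMM.orbit_apply_le hα hαM (fun m => (mul_pos hβ (hd m)).le) hrec hX
    fun m => hx0bar ▸ le_max_of_le_left (le_ciSup (Finite.bddAbove_range _) m)
  have hFv (m) : abHMM.F α M xinf m = xinf m + β * d m := by linarith [congrFun hfix m]
  set l := Real.log (α / (1 - α * M + α))
  have hl : l < 0 := Real.log_neg (by positivity) ((div_lt_one (by linarith)).2 (by linarith))
  have hc : 0 < 1 - α * M := by linarith
  have hW : 0 < x0bar - l := by linarith
  have hβdlow : 0 < β * dlow := hm₀ ▸ mul_pos hβ (hd m₀)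
  have hlam' := hlam.trans (abHMM.one_sub_min_div_add (by positivity) (by linarith))
  refine ⟨hlam' ▸ le_max_of_le_left (by positivity),
    hlam' ▸ max_lt ((div_lt_one (by positivity)).2 (by linarith))
      ((div_lt_one (by positivity)).2 (by linarith)), fun i => ?_⟩
  have hstep : xh (i + 1) - xinf = abHMM.F α M (xh i) - abHMM.F α M xinf := by
    ext m
    simp only [Pi.sub_apply, hrec i, hFv]
    ring
  rw [hstep]
  refine abHMM.norm_F_sub_F_le hα hαM (fun m => mul_pos hβ (hd m)) hFv (hxh i) hX
    (hlam' ▸ le_max_left _ _) fun m => hlam' ▸ le_max_of_le_right ?_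
  exact div_le_div_of_nonneg_left hW.le (by positivity) (by gcongr; exact hdlow_le m)
end

section
/- Let 0 < α < 1/M, β > 0, d ∈ ℝ^N with d_m > 0 for all m, and C > 0. Let (ℓ_i)_{i≥1} be a sequence of random vectors in ℝ^N on a probability space such that E[ℓ_{m,i}] = −d_m and |ℓ_{m,i} + d_m| ≤ C almost surely for all m and i, and let the random sequence (x_i) satisfy x_i = F(x_{i−1}) + β ℓ_i with deterministic initial value x_0 ∈ ℝ^N. Let x̂^∞ be the fixed point of x ↦ F(x) − β d, set d̲ = min_m d_m and λ₁ = 1 − min{ 2α/(1 − αM + 2α), β d̲ / ( 2·log((1 − αM + α)/α) + β C ) }. Then 0 ≤ λ₁ < 1 and there exists a constant K ≥ 0 such that for every i ≥ 0, E[ ‖x_i − x̂^∞‖_∞ ] ≤ K·λ₁^i + βC/(1 − λ₁). -/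
open MeasureTheory

/-!
The fixed point `x̂^∞` lies in the closed negative orthant: `F_m(x) ≤ x_m` wherever `x_m ≥ 0`,
while `x̂^∞ = F(x̂^∞) - β d` with `d > 0`. Writing `F_m(x) = log Q(e^{x_m}, Σ_{n ≠ m} e^{x_n})` with
`Q = ratio (1 - αM) α`, the monotonicity of `Q` in each argument, a few corner inequalities and
the Padé bound `Q(z, 0) ≤ z^λ` for `λ = (1 - αM)/(1 - αM + 2α)` show that
`‖F(x) - F(y)‖ ≤ λ ‖x - y‖` whenever `y ≤ 0`. Hence `‖x_i - x̂^∞‖ ≤ λ ‖x_{i-1} - x̂^∞‖ + βC`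
almost surely, and as `λ ≤ λ₁` iterating this bound gives the estimate pathwise, so also in mean.
-/

open Real

theorem integral_le_mul_pow_add_of_ae_le_mul_add {Ω : Type*} [MeasurableSpace Ω] {μ : Measure Ω}
    [IsProbabilityMeasure μ] {g : ℕ → Ω → ℝ} {K lam c : ℝ} (hlam : 0 ≤ lam) (hlam1 : lam < 1)
    (hc : 0 ≤ c) (hg : ∀ i, 0 ≤ᵐ[μ] g i) (h0 : ∀ᵐ ω ∂μ, g 0 ω ≤ K)
    (hstep : ∀ i, ∀ᵐ ω ∂μ, g (i + 1) ω ≤ lam * g i ω + c) (i : ℕ) :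
    ∫ ω, g i ω ∂μ ≤ K * lam ^ i + c / (1 - lam) := by
  have hpath : ∀ i, ∀ᵐ ω ∂μ, g i ω ≤ K * lam ^ i + c / (1 - lam) := by
    intro i
    induction i with
    | zero =>
      filter_upwards [h0] with ω hω
      have : 0 ≤ c / (1 - lam) := div_nonneg hc (sub_nonneg.2 hlam1.le)
      rw [pow_zero, mul_one]
      linarith
    | succ i ih =>
      filter_upwards [hstep i, ih] with ω hω hi
      have hlam1' : 1 - lam ≠ 0 := (sub_pos.2 hlam1).ne'
      calc g (i + 1) ω ≤ lam * g i ω + c := hω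
        _ ≤ lam * (K * lam ^ i + c / (1 - lam)) + c := by gcongr
        _ = K * lam ^ (i + 1) + c / (1 - lam) := by field_simp; ring
  calc ∫ ω, g i ω ∂μ ≤ ∫ _, K * lam ^ i + c / (1 - lam) ∂μ :=
        integral_mono_of_nonneg (hg i) (integrable_const _) (hpath i)
    _ = K * lam ^ i + c / (1 - lam) := by simp

theorem div_add_two_mul_le_one_sub_min {a b v : ℝ} (ha : 0 ≤ a) (hb : 0 < b) (hv : 0 < v) :
    a / (a + 2 * b) ≤ 1 - min (2 * b / (a + 2 * b)) v ∧ 1 - min (2 * b / (a + 2 * b)) v < 1 := by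
  have hden : 0 < a + 2 * b := by positivity
  have hsplit : a / (a + 2 * b) = 1 - 2 * b / (a + 2 * b) := by
    rw [eq_sub_iff_add_eq, ← add_div, div_eq_one_iff_eq hden.ne']
  exact ⟨hsplit ▸ sub_le_sub_left (min_le_left _ _) 1,
    sub_lt_self 1 (lt_min (by positivity) hv)⟩

namespace abHMM

noncomputable def ratio (a b u r : ℝ) : ℝ := ((a + b) * u + b + b * r) / (a + b + b * u + b * r)

section
variable {a b t s z u u' r r' : ℝ}

theorem ratio_pos (ha : 0 < a) (hb : 0 < b) (hu : 0 ≤ u) (hr : 0 ≤ r) : 0 < ratio a b u r := by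
  unfold ratio; positivity

theorem ratio_le_self (ha : 0 < a) (hb : 0 < b) (hu : 1 ≤ u) (hr : 0 ≤ r) : ratio a b u r ≤ u := by
  unfold ratio
  rw [div_le_iff₀ (by positivity)]
  nlinarith [mul_nonneg hb.le (mul_nonneg (sub_nonneg.2 hu) (by linarith : 0 ≤ 1 + u + r))]

theorem ratio_le_ratio_of_le_left (ha : 0 < a) (hb : 0 < b) (hu : 0 ≤ u) (hr : 0 ≤ r)
    (h : u ≤ u') : ratio a b u r ≤ ratio a b u' r := by
  have hu' : 0 ≤ u' := hu.trans h
  unfold ratio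
  rw [div_le_div_iff₀ (by positivity) (by positivity), ← sub_nonneg]
  have key : ((a + b) * u' + b + b * r) * (a + b + b * u + b * r)
      - ((a + b) * u + b + b * r) * (a + b + b * u' + b * r)
      = a * (u' - u) * (a + 2 * b + b * r) := by ring
  rw [key]
  have := sub_nonneg.2 h
  positivity

theorem ratio_le_ratio_of_le_right (ha : 0 < a) (hb : 0 < b) (hu : 0 ≤ u) (hu1 : u ≤ 1)
    (hr : 0 ≤ r) (h : r ≤ r') : ratio a b u r ≤ ratio a b u r' := by
  have hr' : 0 ≤ r' := hr.trans h
  unfold ratio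
  rw [div_le_div_iff₀ (by positivity) (by positivity), ← sub_nonneg]
  have key : ((a + b) * u + b + b * r') * (a + b + b * u + b * r)
      - ((a + b) * u + b + b * r) * (a + b + b * u + b * r')
      = a * b * (1 - u) * (r' - r) := by ring
  rw [key]
  have := sub_nonneg.2 h
  have := sub_nonneg.2 hu1
  positivity

theorem ratio_le_ratio_of_le_right_of_one_le (ha : 0 < a) (hb : 0 < b) (hu1 : 1 ≤ u)
    (hr : 0 ≤ r) (h : r ≤ r') : ratio a b u r' ≤ ratio a b u r := by
  have hu : 0 ≤ u := zero_le_one.trans hu1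
  have hr' : 0 ≤ r' := hr.trans h
  unfold ratio
  rw [div_le_div_iff₀ (by positivity) (by positivity), ← sub_nonneg]
  have key : ((a + b) * u + b + b * r) * (a + b + b * u + b * r')
      - ((a + b) * u + b + b * r') * (a + b + b * u + b * r)
      = a * b * (u - 1) * (r' - r) := by ring
  rw [key]
  have := sub_nonneg.2 h
  have := sub_nonneg.2 hu1
  positivity

theorem ratio_mul_le_mul (ha : 0 < a) (hb : 0 < b) (ht : 0 ≤ t) (hs : 0 ≤ s) (hz : 1 ≤ z)
    (htz : t * z ≤ 1) : ratio a b (t * z) (s * z) ≤ ratio a b t s * ratio a b z 0 := by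
  unfold ratio
  rw [div_mul_div_comm, div_le_div_iff₀ (by positivity) (by positivity), ← sub_nonneg]
  have key : ((a + b) * t + b + b * s) * ((a + b) * z + b + b * 0)
        * (a + b + b * (t * z) + b * (s * z))
      - ((a + b) * (t * z) + b + b * (s * z)) * ((a + b + b * t + b * s) * (a + b + b * z + b * 0))
      = a * b * (z - 1)
        * ((a + b) * (1 - t) * (1 - t * z) + (a + 2 * b) * t * s * z + b * s ^ 2 * z) := by
    ring
  rw [key]
  have := sub_nonneg.2 hz
  have := sub_nonneg.2 htz
  have : 0 ≤ 1 - t := by nlinarith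
  positivity

theorem ratio_div_le_mul (ha : 0 < a) (hb : 0 < b) (hs : 0 ≤ s) (hz : 1 ≤ z) :
    ratio a b z (s / z) ≤ ratio a b 1 s * ratio a b z 0 := by
  have hz0 : 0 < z := by linarith
  unfold ratio
  rw [div_mul_div_comm, div_le_div_iff₀ (by positivity) (by positivity), ← sub_nonneg]
  have key : ((a + b) * 1 + b + b * s) * ((a + b) * z + b + b * 0)
        * (a + b + b * z + b * (s / z))
      - ((a + b) * z + b + b * (s / z)) * ((a + b + b * 1 + b * s) * (a + b + b * z + b * 0))
      = a * b * (z - 1) * s * (a + 2 * b + b * s) / z := by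
    field_simp; ring
  rw [key]
  have := sub_nonneg.2 hz
  positivity

theorem ratio_one_mul_le_mul (ha : 0 < a) (hb : 0 < b) (ht : 0 < t) (ht1 : t ≤ 1) (hs : 0 ≤ s) :
    ratio a b 1 (s * t) ≤ ratio a b t s * ratio a b t⁻¹ 0 := by
  unfold ratio
  rw [div_mul_div_comm, div_le_div_iff₀ (by positivity) (by positivity), ← sub_nonneg]
  have key : ((a + b) * t + b + b * s) * ((a + b) * t⁻¹ + b + b * 0)
        * (a + b + b * 1 + b * (s * t))
      - ((a + b) * 1 + b + b * (s * t)) * ((a + b + b * t + b * s) * (a + b + b * t⁻¹ + b * 0))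
      = a * b * s * (1 - t) * (a + 2 * b + b * s * t) / t := by
    field_simp; ring
  rw [key]
  have := sub_nonneg.2 ht1
  positivity

/-- `ratio a b z 0` is the `[1/1]` Padé approximant of `z ^ (a / (a + 2 * b))` at `z = 1`. -/
theorem ratio_zero_le_rpow (ha : 0 < a) (hb : 0 < b) (hz : 1 ≤ z) :
    ratio a b z 0 ≤ z ^ (a / (a + 2 * b)) := by
  set lam := a / (a + 2 * b)
  let f : ℝ → ℝ := fun t => lam * log t - log ((a + b) * t + b) + log (a + b + b * t)
  have hderiv : ∀ t, 0 < t →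
      HasDerivAt f (lam / t - (a + b) / ((a + b) * t + b) + b / (a + b + b * t)) t := by
    intro t ht
    exact ((((hasDerivAt_log ht.ne').const_mul lam).sub
      ((((hasDerivAt_id t).const_mul (a + b)).add_const b).log (by simp; positivity))).add
      ((((hasDerivAt_id t).const_mul b).const_add (a + b)).log (by simp; positivity))).congr_deriv
      (by simp only [id, mul_one, div_eq_mul_inv])
  have hmono : MonotoneOn f (Set.Ici 1) := by
    refine monotoneOn_of_hasDerivWithinAt_nonneg (convex_Ici 1)
      (fun t ht => (hderiv t (by linarith [Set.mem_Ici.1 ht])).continuousAt.continuousWithinAt)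
      (fun t ht => (hderiv t ?_).hasDerivWithinAt) fun t ht => ?_
    · rw [interior_Ici] at ht; linarith [Set.mem_Ioi.1 ht]
    rw [interior_Ici] at ht
    have ht0 : 0 < t := by linarith [Set.mem_Ioi.1 ht]
    have key : lam / t - (a + b) / ((a + b) * t + b) + b / (a + b + b * t)
        = a * b * (a + b) * (t - 1) ^ 2
          / ((a + 2 * b) * t * ((a + b) * t + b) * (a + b + b * t)) := by
      simp only [lam]; field_simp; ring
    rw [key]; positivity
  have hf : f 1 ≤ f z := hmono Set.self_mem_Ici hz hz
  have hz0 : 0 < z := by linarith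
  have hr : ratio a b z 0 = ((a + b) * z + b) / (a + b + b * z) := by simp [ratio]
  rw [hr, rpow_def_of_pos hz0, ← log_le_iff_le_exp (by positivity),
    log_div (by positivity) (by positivity)]
  simp only [f, log_one, mul_zero, mul_one] at hf
  linarith

theorem ratio_le_ratio_mul_rpow_of_le_mul {t' s' : ℝ} (ha : 0 < a) (hb : 0 < b) (ht : 0 < t)
    (ht1 : t ≤ 1) (hs : 0 ≤ s) (hz : 1 ≤ z) (ht' : 0 ≤ t') (ht'z : t' ≤ t * z) (hs'z : s / z ≤ s')
    (hs'z' : s' ≤ s * z) : ratio a b t' s' ≤ ratio a b t s * z ^ (a / (a + 2 * b)) := by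
  have hz0 : 0 < z := by linarith
  have hs' : 0 ≤ s' := (div_nonneg hs hz0.le).trans hs'z
  have hQ : 0 ≤ ratio a b t s := (ratio_pos ha hb ht.le hs).le
  have hleft : ratio a b t' s' ≤ ratio a b (t * z) s' :=
    ratio_le_ratio_of_le_left ha hb ht' hs' ht'z
  rcases le_or_gt (t * z) 1 with htz | htz
  · calc ratio a b t' s' ≤ ratio a b (t * z) s' := hleft
      _ ≤ ratio a b (t * z) (s * z) :=
        ratio_le_ratio_of_le_right ha hb (by positivity) htz hs' hs'z'
      _ ≤ ratio a b t s * ratio a b z 0 := ratio_mul_le_mul ha hb ht.le hs hz htz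
      _ ≤ ratio a b t s * z ^ (a / (a + 2 * b)) := by gcongr; exact ratio_zero_le_rpow ha hb hz
  · -- past `u = 1` the ratio decreases in `r`, so pass through the corner `(1, s t)`
    have hcorner : s / z = s * t / (t * z) := by field_simp
    calc ratio a b t' s' ≤ ratio a b (t * z) s' := hleft
      _ ≤ ratio a b (t * z) (s * t / (t * z)) := by
        rw [← hcorner]
        exact ratio_le_ratio_of_le_right_of_one_le ha hb htz.le (by positivity) hs'z
      _ ≤ ratio a b 1 (s * t) * ratio a b (t * z) 0 := ratio_div_le_mul ha hb (by positivity) htz.le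
      _ ≤ ratio a b t s * ratio a b t⁻¹ 0 * ratio a b (t * z) 0 := by
        gcongr
        · exact (ratio_pos ha hb (by positivity) le_rfl).le
        · exact ratio_one_mul_le_mul ha hb ht ht1 hs
      _ ≤ ratio a b t s * (t⁻¹ ^ (a / (a + 2 * b)) * (t * z) ^ (a / (a + 2 * b))) := by
        rw [mul_assoc]
        gcongr
        · exact (ratio_pos ha hb (by positivity) le_rfl).le
        · exact ratio_zero_le_rpow ha hb (one_le_inv₀ ht |>.2 ht1)
        · exact ratio_zero_le_rpow ha hb htz.le
      _ = ratio a b t s * z ^ (a / (a + 2 * b)) := by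
        rw [← mul_rpow (by positivity) (by positivity), inv_mul_cancel_left₀ ht.ne']

theorem ratio_le_ratio_mul_rpow_of_div_le {t' s' : ℝ} (ha : 0 < a) (hb : 0 < b) (ht : 0 ≤ t)
    (ht1 : t ≤ 1) (hs : 0 ≤ s) (hz : 1 ≤ z) (ht'z : t / z ≤ t') (hs'z : s / z ≤ s') :
    ratio a b t s ≤ ratio a b t' s' * z ^ (a / (a + 2 * b)) := by
  have hz0 : 0 < z := by linarith
  have hsz : 0 ≤ s / z := by positivity
  have htz : 0 ≤ t / z := by positivity
  have hshrink : ratio a b (t / z) (s / z) ≤ ratio a b t' s' :=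
    calc ratio a b (t / z) (s / z) ≤ ratio a b (t / z) s' :=
          ratio_le_ratio_of_le_right ha hb htz ((div_le_one hz0).2 (ht1.trans hz)) hsz hs'z
      _ ≤ ratio a b t' s' := ratio_le_ratio_of_le_left ha hb htz (hsz.trans hs'z) ht'z
  calc ratio a b t s = ratio a b (t / z * z) (s / z * z) := by
        rw [div_mul_cancel₀ t hz0.ne', div_mul_cancel₀ s hz0.ne']
    _ ≤ ratio a b (t / z) (s / z) * ratio a b z 0 :=
        ratio_mul_le_mul ha hb htz hsz hz (by rwa [div_mul_cancel₀ t hz0.ne'])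
    _ ≤ ratio a b t' s' * z ^ (a / (a + 2 * b)) :=
        mul_le_mul hshrink (ratio_zero_le_rpow ha hb hz) (ratio_pos ha hb hz0.le le_rfl).le
          (ratio_pos ha hb (htz.trans ht'z) (hsz.trans hs'z)).le

end

theorem F_apply_eq_log_ratio (α : ℝ) (M : ℕ) (w : Fin (M - 1) → ℝ) (m : Fin (M - 1)) :
    F α M w m = log (ratio (1 - α * M) α (exp (w m)) (∑ n ∈ Finset.univ.erase m, exp (w n))) := by
  rw [F, ← Finset.add_sum_erase _ _ (Finset.mem_univ m), ratio]
  ring_nf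

section
variable {α : ℝ} {M : ℕ}

theorem F_apply_le_self (hα : 0 < α) (hαM : α * M < 1) (w : Fin (M - 1) → ℝ) (m : Fin (M - 1))
    (hw : 0 ≤ w m) : F α M w m ≤ w m := by
  have ha : 0 < 1 - α * M := by linarith
  have hr : 0 ≤ ∑ n ∈ Finset.univ.erase m, exp (w n) :=
    Finset.sum_nonneg fun _ _ => (exp_pos _).le
  calc F α M w m ≤ log (exp (w m)) := by
        rw [F_apply_eq_log_ratio]
        exact log_le_log (ratio_pos ha hα (exp_pos _).le hr)
          (ratio_le_self ha hα (one_le_exp hw) hr)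
    _ = w m := log_exp _

theorem nonpos_of_eq_F_sub (hα : 0 < α) (hαM : α * M < 1) {x e : Fin (M - 1) → ℝ}
    (he : ∀ m, 0 < e m) (hx : ∀ m, x m = F α M x m - e m) (m : Fin (M - 1)) : x m ≤ 0 := by
  by_contra! h
  linarith [F_apply_le_self hα hαM x m h.le, hx m, he m]

/-- `F` is not a `λ`-contraction on all of `ℝ^N`: the bound needs `exp (y m) ≤ 1`. -/
theorem norm_F_sub_F_le_of_nonpos (hα : 0 < α) (hαM : α * M < 1) (x y : Fin (M - 1) → ℝ)
    (hy : ∀ n, y n ≤ 0) :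
    ‖F α M x - F α M y‖ ≤ (1 - α * M) / (1 - α * M + 2 * α) * ‖x - y‖ := by
  have ha : 0 < 1 - α * M := by linarith
  set c := ‖x - y‖
  have hxy : ∀ n, |x n - y n| ≤ c := fun n => by simpa using norm_le_pi_norm (x - y) n
  have hup : ∀ n, exp (x n) ≤ exp (y n) * exp c := fun n => by
    rw [← exp_add]; exact exp_le_exp.2 (by linarith [(abs_le.1 (hxy n)).2])
  have hlo : ∀ n, exp (y n) / exp c ≤ exp (x n) := fun n => by
    rw [← exp_sub]; exact exp_le_exp.2 (by linarith [(abs_le.1 (hxy n)).1])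
  refine (pi_norm_le_iff_of_nonneg (by positivity)).2 fun m => ?_
  set r : (Fin (M - 1) → ℝ) → ℝ := fun w => ∑ n ∈ Finset.univ.erase m, exp (w n)
  have hr : ∀ w, 0 ≤ r w := fun w => Finset.sum_nonneg fun n _ => (exp_pos _).le
  have hrup : r x ≤ r y * exp c := by
    rw [Finset.sum_mul]; exact Finset.sum_le_sum fun n _ => hup n
  have hrlo : r y / exp c ≤ r x := by
    rw [Finset.sum_div]; exact Finset.sum_le_sum fun n _ => hlo n
  have hz : 1 ≤ exp c := one_le_exp (norm_nonneg _)
  have hym : exp (y m) ≤ 1 := exp_le_one_iff.2 (hy m)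
  have upper := ratio_le_ratio_mul_rpow_of_le_mul ha hα (exp_pos _) hym (hr y) hz (exp_pos _).le
    (hup m) hrlo hrup
  have lower := ratio_le_ratio_mul_rpow_of_div_le ha hα (exp_pos _).le hym (hr y) hz (hlo m) hrlo
  rw [← exp_mul, mul_comm c] at upper lower
  have log_sub_le : ∀ A B k : ℝ, 0 < A → 0 < B → A ≤ B * exp k → log A - log B ≤ k :=
    fun A B k hA hB h => by
      have := log_le_log hA h
      rw [log_mul hB.ne' (exp_pos k).ne', log_exp] at this
      linarith
  rw [Pi.sub_apply, F_apply_eq_log_ratio, F_apply_eq_log_ratio, Real.norm_eq_abs, abs_sub_le_iff]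
  have hQx := ratio_pos ha hα (exp_pos (x m)).le (hr x)
  have hQy := ratio_pos ha hα (exp_pos (y m)).le (hr y)
  exact ⟨log_sub_le _ _ _ hQx hQy upper, log_sub_le _ _ _ hQy hQx lower⟩

theorem norm_F_add_sub_fixedPoint_le (hα : 0 < α) (hαM : α * M < 1) {β C : ℝ} (hβ : 0 < β)
    (hC : 0 ≤ C)
    {d xinf : Fin (M - 1) → ℝ} (hd : ∀ m, 0 < d m)
    (hfix : xinf = fun m => F α M xinf m - β * d m) (w l : Fin (M - 1) → ℝ)
    (hl : ∀ m, |l m + d m| ≤ C) :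
    ‖(fun m => F α M w m + β * l m) - xinf‖
      ≤ (1 - α * M) / (1 - α * M + 2 * α) * ‖w - xinf‖ + β * C := by
  have hxinf : ∀ m, xinf m ≤ 0 :=
    nonpos_of_eq_F_sub hα hαM (fun m => mul_pos hβ (hd m)) (congrFun hfix)
  have hdecomp : (fun m => F α M w m + β * l m) - xinf
      = (F α M w - F α M xinf) + β • (l + d) := by
    funext m
    have := congrFun hfix m
    simp only [Pi.add_apply, Pi.sub_apply, Pi.smul_apply, smul_eq_mul] at this ⊢
    linarith
  have hnoise : ‖β • (l + d)‖ ≤ β * C := by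
    rw [norm_smul, Real.norm_of_nonneg hβ.le]
    gcongr
    exact (pi_norm_le_iff_of_nonneg hC).2 fun m => by simpa using hl m
  rw [hdecomp]
  exact (norm_add_le _ _).trans
    (add_le_add (norm_F_sub_F_le_of_nonpos hα hαM w xinf hxinf) hnoise)

end

end abHMM

theorem abHMM_stochastic_distance_to_fixed_point_general (M : ℕ) (hM : 2 ≤ M) (α β C : ℝ)
    (hα : 0 < α) (hα' : α < 1 / M) (hβ : 0 < β) (hC : 0 < C)
    (d : Fin (M - 1) → ℝ) (hd : ∀ m, 0 < d m)
    {Ω : Type*} [MeasurableSpace Ω] (μ : Measure Ω) [IsProbabilityMeasure μ]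
    (ℓ : ℕ → Ω → Fin (M - 1) → ℝ)
    (hbound : ∀ i, 1 ≤ i → ∀ m, ∀ᵐ ω ∂μ, |ℓ i ω m + d m| ≤ C)
    (x : ℕ → Ω → Fin (M - 1) → ℝ) (x₀ : Fin (M - 1) → ℝ) (hx0 : ∀ ω, x 0 ω = x₀)
    (hrec : ∀ i ω, x (i + 1) ω = fun m => abHMM.F α M (x i ω) m + β * ℓ (i + 1) ω m)
    (xinf : Fin (M - 1) → ℝ) (hfix : xinf = fun m => abHMM.F α M xinf m - β * d m)
    (dlow : ℝ) (hdlow : dlow = sInf (Set.range d))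
    (lam₁ : ℝ)
    (hlam₁ : lam₁ = 1 - min (2 * α / (1 - α * M + 2 * α))
      (β * dlow / (2 * Real.log ((1 - α * M + α) / α) + β * C))) :
    0 ≤ lam₁ ∧ lam₁ < 1 ∧
      ∃ K : ℝ, 0 ≤ K ∧
        ∀ i : ℕ, ∫ ω, ‖x i ω - xinf‖ ∂μ ≤ K * lam₁ ^ i + β * C / (1 - lam₁) := by
  have hαM : α * M < 1 := by rwa [lt_div_iff₀ (by positivity)] at hα'
  have hdlow_pos : 0 < dlow := by
    have : Nonempty (Fin (M - 1)) := ⟨⟨0, by omega⟩⟩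
    obtain ⟨m, hm⟩ := (Set.range_nonempty d).csInf_mem (Set.finite_range d)
    rw [hdlow, ← hm]
    exact hd m
  have hlog : 0 < log ((1 - α * M + α) / α) := log_pos (by rw [one_lt_div hα]; linarith)
  obtain ⟨hcontr, hlam₁1⟩ := div_add_two_mul_le_one_sub_min (by linarith : 0 ≤ 1 - α * M) hα
    (by positivity : 0 < β * dlow / (2 * log ((1 - α * M + α) / α) + β * C))
  rw [← hlam₁] at hcontr hlam₁1
  have hlam₁0 : 0 ≤ lam₁ := (div_nonneg (by linarith) (by linarith)).trans hcontr
  refine ⟨hlam₁0, hlam₁1, ‖x₀ - xinf‖, norm_nonneg _, fun i => ?_⟩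
  refine integral_le_mul_pow_add_of_ae_le_mul_add (g := fun i ω => ‖x i ω - xinf‖) hlam₁0 hlam₁1
    (by positivity) (fun _ => ae_of_all _ fun _ => norm_nonneg _)
    (ae_of_all _ fun ω => by rw [hx0]) (fun i => ?_) i
  filter_upwards [ae_all_iff.2 (hbound (i + 1) (Nat.le_add_left 1 i))] with ω hω
  rw [hrec]
  calc _ ≤ (1 - α * M) / (1 - α * M + 2 * α) * ‖x i ω - xinf‖ + β * C :=
        abHMM.norm_F_add_sub_fixedPoint_le hα hαM hβ hC.le hd hfix _ _ hω
    _ ≤ lam₁ * ‖x i ω - xinf‖ + β * C := by gcongr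

/-- Lemma 5: for the stochastic system `x_i = F(x_{i-1}) + β ℓ_i`, where the
log-likelihood ratios `ℓ_{m,i}` have mean `-d_m` and a.s. deviation bound `C`, with
`λ₁ = 1 - min{2α/(1-αM+2α), β d̲/(2 log((1-αM+α)/α) + βC)}` one has `0 ≤ λ₁ < 1` and
`E[‖x_i - x̂^∞‖_∞] ≤ K λ₁^i + βC/(1-λ₁)` for some constant `K ≥ 0` and every `i`. -/
theorem abHMM_stochastic_distance_to_fixed_point (M : ℕ) (hM : 2 ≤ M) (α β C : ℝ)
    (hα : 0 < α) (hα' : α < 1 / M) (hβ : 0 < β) (hC : 0 < C)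
    (d : Fin (M - 1) → ℝ) (hd : ∀ m, 0 < d m)
    {Ω : Type*} [MeasurableSpace Ω] (μ : Measure Ω) [IsProbabilityMeasure μ]
    (ℓ : ℕ → Ω → Fin (M - 1) → ℝ) (hmeas : ∀ i, Measurable (ℓ i))
    (hmean : ∀ i, 1 ≤ i → ∀ m, ∫ ω, ℓ i ω m ∂μ = -d m)
    (hbound : ∀ i, 1 ≤ i → ∀ m, ∀ᵐ ω ∂μ, |ℓ i ω m + d m| ≤ C)
    (x : ℕ → Ω → Fin (M - 1) → ℝ) (x₀ : Fin (M - 1) → ℝ) (hx0 : ∀ ω, x 0 ω = x₀)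
    (hrec : ∀ i ω, x (i + 1) ω = fun m => abHMM.F α M (x i ω) m + β * ℓ (i + 1) ω m)
    (xinf : Fin (M - 1) → ℝ) (hfix : xinf = fun m => abHMM.F α M xinf m - β * d m)
    (dlow : ℝ) (hdlow : dlow = sInf (Set.range d))
    (lam₁ : ℝ)
    (hlam₁ : lam₁ = 1 - min (2 * α / (1 - α * M + 2 * α))
      (β * dlow / (2 * Real.log ((1 - α * M + α) / α) + β * C))) :
    0 ≤ lam₁ ∧ lam₁ < 1 ∧
      ∃ K : ℝ, 0 ≤ K ∧
        ∀ i : ℕ, ∫ ω, ‖x i ω - xinf‖ ∂μ ≤ K * lam₁ ^ i + β * C / (1 - lam₁) :=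
  abHMM_stochastic_distance_to_fixed_point_general M hM α β C hα hα' hβ hC d hd μ ℓ hbound x x₀ hx0
    hrec xinf hfix dlow hdlow lam₁ hlam₁
end
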